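/- Let T be a finite tree with positive vertex weights and positive edge lengths. For any 2-point set X = {x₁, x₂} of points on T, there exists an edge e = (u,v) of T such that x₁ lies in (the closure of) T_u(v) and x₂ lies in (the closure of) T_v(u), and consequently S(X,T) ≥ max{ r(T_u(v)), r(T_v(u)) } ≥ min over edges e' of max of the two one-sided weighted radii determined by e'. Hence the optimal 2-center cost equals min_{e=(u,v)∈E} max{ r(T_u(v)), r(T_v(u)) }. -/

import Mathlib

/-- Length of a walk with respect to edge lengths `ℓ`. -/
def walkLength {V : Type*} {G : SimpleGraph V} (ℓ : V → V → ℝ) :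
    ∀ {u v : V}, G.Walk u v → ℝ :=
  fun p => (p.darts.map fun d => ℓ d.toProd.1 d.toProd.2).sum

/-- Shortest-path distance between vertices of `G` with edge lengths `ℓ`. -/
noncomputable def vdist {V : Type*} (G : SimpleGraph V) (ℓ : V → V → ℝ) (u v : V) : ℝ :=
  sInf {x | ∃ p : G.Walk u v, x = walkLength ℓ p}

/-- Distance from the point on edge `(u,v)` at parameter `s ∈ [0,1]` to vertex `z`. -/
noncomputable def pdist {V : Type*} (G : SimpleGraph V) (ℓ : V → V → ℝ)
    (u v : V) (s : ℝ) (z : V) : ℝ :=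
  min (s * ℓ u v + vdist G ℓ u z) ((1 - s) * ℓ u v + vdist G ℓ v z)

/-- The vertices of the connected component of `G - v` containing `t`. -/
def branch {V : Type*} (G : SimpleGraph V) (v t : V) : Set V :=
  {u | ∃ p : G.Walk t u, v ∉ p.support}

/-- `(a, b, s)` represents a point of the geometric realization of the subtree on the
vertex set `S`: either a point of an edge of `S` or a vertex of `S`. -/
def IsPointOn {V : Type*} (G : SimpleGraph V) (S : Set V) (a b : V) (s : ℝ) : Prop :=
  a ∈ S ∧ b ∈ S ∧ ((G.Adj a b ∧ s ∈ Set.Icc (0:ℝ) 1) ∨ (a = b ∧ s = 0))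

/-- The point `(a,b,s)` lies in the closure of the side with vertex set `A`, where
`vopp` is the endpoint of the deleted edge on the other side. -/
def InClosureOfSide {V : Type*} (A : Set V) (vopp : V) (a b : V) (s : ℝ) : Prop :=
  (a ∈ insert vopp A ∧ b ∈ insert vopp A) ∨ (a = vopp ∧ s = 0) ∨ (b = vopp ∧ s = 1)

/-- `max_{z ∈ S} w(z)·d(x,z)` for the point `x = (a,b,s)`. -/
noncomputable def sideSup {V : Type*} (G : SimpleGraph V) (ℓ : V → V → ℝ) (w : V → ℝ)
    (S : Set V) (a b : V) (s : ℝ) : ℝ :=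
  sSup ((fun z => w z * pdist G ℓ a b s z) '' S)

/-- The weighted radius of the subtree on vertex set `S`. -/
noncomputable def radius {V : Type*} (G : SimpleGraph V) (ℓ : V → V → ℝ) (w : V → ℝ)
    (S : Set V) : ℝ :=
  sInf {x | ∃ a b s, IsPointOn G S a b s ∧ x = sideSup G ℓ w S a b s}

/-- `g(e)` for an edge `e = (u,v)`. -/
noncomputable def gval {V : Type*} (G : SimpleGraph V) (ℓ : V → V → ℝ) (w : V → ℝ)
    (u v : V) : ℝ :=
  max (radius G ℓ w (branch G v u)) (radius G ℓ w (branch G u v))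

/-- `S(X,T)` for the two points `(a,b,s)` and `(a',b',s')`. -/
noncomputable def twoCost {V : Type*} [Fintype V] [Nonempty V] (G : SimpleGraph V)
    (ℓ : V → V → ℝ) (w : V → ℝ) (a b : V) (s : ℝ) (a' b' : V) (s' : ℝ) : ℝ :=
  Finset.univ.sup' Finset.univ_nonempty fun z =>
    w z * min (pdist G ℓ a b s z) (pdist G ℓ a' b' s' z)

/-!
Let `x = (a,b,s)` and `x' = (a',b',s')` be two centres. Along the tree path from `a` to `a'` the
function `d(x',·) - d(x,·)` changes sign, which yields an edge `(u,v)` with `x` on the side of `u`,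
`x'` on the side of `v`, `d(x,u) ≤ d(x',u)` and `d(x',v) ≤ d(x,v)` (when the sign already fails at
`a` or `a'`, the edge carrying `x` or `x'` does the job). Every path from `x'` into the side of `u`
passes through `u`, so `x` serves that side at least as well as `x'`, and moving `x` onto `u` when
it sits on the edge `(u,v)` only shortens its distances to that side; hence `S(X,T) ≥ r(T_u(v))`,
and symmetrically for `v`. Conversely, near-optimal centres of the two sides of any edge form a
2-centre of cost close to `max(r(T_u(v)), r(T_v(u)))`.
-/

open SimpleGraph Set

section Distance

variable {V : Type*} {G : SimpleGraph V} {ℓ : V → V → ℝ}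

@[simp] lemma walkLength_nil (u : V) : walkLength ℓ (Walk.nil : G.Walk u u) = 0 := rfl

@[simp] lemma walkLength_cons {u v w : V} (h : G.Adj u v) (p : G.Walk v w) :
    walkLength ℓ (Walk.cons h p) = ℓ u v + walkLength ℓ p := by
  simp [walkLength]

lemma walkLength_append {u v w : V} (p : G.Walk u v) (q : G.Walk v w) :
    walkLength ℓ (p.append q) = walkLength ℓ p + walkLength ℓ q := by
  simp [walkLength, Walk.darts_append]

lemma walkLength_reverse (hsym : ∀ u v, ℓ u v = ℓ v u) {u v : V} (p : G.Walk u v) :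
    walkLength ℓ p.reverse = walkLength ℓ p := by
  simp [walkLength, Walk.darts_reverse, List.sum_reverse, Function.comp_def, hsym]

lemma vdist_comm (hsym : ∀ u v, ℓ u v = ℓ v u) (u v : V) : vdist G ℓ u v = vdist G ℓ v u := by
  have : {x | ∃ p : G.Walk u v, x = walkLength ℓ p} = {x | ∃ p : G.Walk v u, x = walkLength ℓ p} :=
    Set.ext fun _ => ⟨fun ⟨p, hp⟩ => ⟨p.reverse, hp.trans (walkLength_reverse hsym p).symm⟩,
      fun ⟨p, hp⟩ => ⟨p.reverse, hp.trans (walkLength_reverse hsym p).symm⟩⟩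
  rw [vdist, vdist, this]

variable (hℓ : ∀ u v, 0 ≤ ℓ u v)
include hℓ

lemma walkLength_le_of_darts_sublist {u v u' v' : V} {p : G.Walk u v} {q : G.Walk u' v'}
    (h : p.darts.Sublist q.darts) : walkLength ℓ p ≤ walkLength ℓ q :=
  (h.map _).sum_le_sum fun _ hx => by
    obtain ⟨d, -, rfl⟩ := List.mem_map.1 hx
    exact hℓ _ _

lemma walkLength_nonneg {u v : V} (p : G.Walk u v) : 0 ≤ walkLength ℓ p :=
  walkLength_le_of_darts_sublist hℓ (p := (Walk.nil : G.Walk u u)) (List.nil_sublist _)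

lemma vdist_le_walkLength {u v : V} (p : G.Walk u v) : vdist G ℓ u v ≤ walkLength ℓ p :=
  csInf_le ⟨0, by rintro _ ⟨q, rfl⟩; exact walkLength_nonneg hℓ q⟩ ⟨p, rfl⟩

lemma vdist_nonneg (u v : V) : 0 ≤ vdist G ℓ u v :=
  Real.sInf_nonneg (by rintro _ ⟨p, rfl⟩; exact walkLength_nonneg hℓ p)

lemma vdist_self (u : V) : vdist G ℓ u u = 0 :=
  le_antisymm (vdist_le_walkLength hℓ Walk.nil) (vdist_nonneg hℓ u u)

lemma vdist_eq_walkLength_of_isPath (hG : G.IsAcyclic) {u v : V} {p : G.Walk u v}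
    (hp : p.IsPath) : vdist G ℓ u v = walkLength ℓ p := by
  classical
  refine le_antisymm (vdist_le_walkLength hℓ p) (le_csInf ⟨_, p, rfl⟩ ?_)
  rintro _ ⟨q, rfl⟩
  have hq : q.bypass = p :=
    congrArg Subtype.val ((hG.subsingleton_path u v).elim ⟨_, q.bypass_isPath⟩ ⟨p, hp⟩)
  exact hq ▸ walkLength_le_of_darts_sublist hℓ q.darts_bypass_sublist_darts

lemma vdist_of_adj (hG : G.IsAcyclic) {u v : V} (h : G.Adj u v) : vdist G ℓ u v = ℓ u v := by
  rw [vdist_eq_walkLength_of_isPath hℓ hG (Walk.IsPath.of_adj h)]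
  simp

lemma vdist_triangle (hT : G.IsTree) (u v z : V) :
    vdist G ℓ u z ≤ vdist G ℓ u v + vdist G ℓ v z := by
  classical
  obtain ⟨p⟩ := hT.1 u v
  obtain ⟨q⟩ := hT.1 v z
  rw [vdist_eq_walkLength_of_isPath hℓ hT.2 p.bypass_isPath,
    vdist_eq_walkLength_of_isPath hℓ hT.2 q.bypass_isPath, ← walkLength_append]
  exact vdist_le_walkLength hℓ _

end Distance

section Branch

variable {V : Type*} {G : SimpleGraph V} {u v t y z : V}

lemma start_mem_branch (h : t ≠ v) : t ∈ branch G v t :=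
  ⟨Walk.nil, by simpa using h.symm⟩

lemma notMem_branch (v t : V) : v ∉ branch G v t :=
  fun ⟨p, hp⟩ => hp p.end_mem_support

lemma mem_branch_of_adj (hy : y ∈ branch G v t) (hyz : G.Adj y z) (hz : z ≠ v) :
    z ∈ branch G v t := by
  obtain ⟨p, hp⟩ := hy
  exact ⟨p.concat hyz, by simp [Walk.support_concat, hp, hz.symm]⟩

lemma mem_branch_or_mem_branch (hG : G.Connected) (hne : u ≠ v) (z : V) :
    z ∈ branch G v u ∨ z ∈ branch G u v := by
  obtain ⟨p⟩ := hG z u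
  induction p with
  | nil => exact Or.inl (start_mem_branch hne)
  | @cons x y u h p ih =>
    rcases ih hne with hy | hy
    · by_cases hxv : x = v
      · exact Or.inr (by subst hxv; exact start_mem_branch hne.symm)
      · exact Or.inl (mem_branch_of_adj hy h.symm hxv)
    · by_cases hxu : x = u
      · exact Or.inl (by subst hxu; exact start_mem_branch hne)
      · exact Or.inr (mem_branch_of_adj hy h.symm hxu)

lemma disjoint_branch (hG : G.IsAcyclic) (h : G.Adj u v) :
    Disjoint (branch G v u) (branch G u v) := by
  refine Set.disjoint_left.2 fun z ⟨p, hp⟩ ⟨q, hq⟩ => ?_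
  refine isAcyclic_iff_forall_adj_isBridge.1 hG h
    (reachable_deleteEdges_iff_exists_walk.2 ⟨p.append q.reverse, fun he => ?_⟩)
  rw [Walk.edges_append, List.mem_append, Walk.edges_reverse, List.mem_reverse] at he
  rcases he with he | he
  · exact hp (p.snd_mem_support_of_mem_edges he)
  · exact hq (q.fst_mem_support_of_mem_edges he)

lemma eq_and_eq_of_adj_of_mem_branch (hG : G.IsAcyclic) (h : G.Adj u v) (hyz : G.Adj y z)
    (hy : y ∈ branch G v u) (hz : z ∈ branch G u v) : y = u ∧ z = v := by
  have hzv : z = v := by_contra fun hzv =>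
    Set.disjoint_left.1 (disjoint_branch hG h) (mem_branch_of_adj hy hyz hzv) hz
  exact ⟨by_contra fun hyu =>
    Set.disjoint_left.1 (disjoint_branch hG h) hy (mem_branch_of_adj hz hyz.symm hyu), hzv⟩

lemma mem_insert_branch_of_adj {a b : V} (ha : a ∈ branch G v u) (hab : G.Adj a b ∨ a = b) :
    b ∈ insert v (branch G v u) := by
  by_cases hbv : b = v
  · exact hbv ▸ mem_insert _ _
  rcases hab with hab | rfl
  · exact mem_insert_of_mem _ (mem_branch_of_adj ha hab hbv)
  · exact mem_insert_of_mem _ ha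

lemma inClosureOfSide_of_mem_branch {a b : V} {s : ℝ}
    (h : a ∈ branch G v u ∨ b ∈ branch G v u) (hab : G.Adj a b ∨ a = b) :
    InClosureOfSide (branch G v u) v a b s := by
  rcases h with ha | hb
  · exact Or.inl ⟨mem_insert_of_mem _ ha, mem_insert_branch_of_adj ha hab⟩
  · exact Or.inl ⟨mem_insert_branch_of_adj hb (hab.imp Adj.symm Eq.symm), mem_insert_of_mem _ hb⟩

lemma eq_or_eq_of_mem_insert_branch (hG : G.IsAcyclic) (h : G.Adj u v) {a b : V}
    (hab : G.Adj a b ∨ a = b) (ha : a ∈ insert v (branch G v u))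
    (hb : b ∈ insert v (branch G v u)) (hnot : ¬(a ∈ branch G v u ∧ b ∈ branch G v u)) :
    (a = u ∨ a = v) ∧ (b = u ∨ b = v) := by
  have hv : ∀ y ∈ branch G v u, G.Adj y v ∨ y = v → y = u := by
    rintro y hy (hyv | rfl)
    · exact (eq_and_eq_of_adj_of_mem_branch hG h hyv hy (start_mem_branch h.ne.symm)).1
    · exact absurd hy (notMem_branch _ _)
  rcases ha with rfl | ha <;> rcases hb with rfl | hb
  · exact ⟨.inr rfl, .inr rfl⟩
  · exact ⟨.inr rfl, .inl (hv b hb (hab.imp Adj.symm Eq.symm))⟩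
  · exact ⟨.inl (hv a ha hab), .inr rfl⟩
  · exact absurd ⟨ha, hb⟩ hnot

lemma exists_adj_sign_change_of_isPath (φ : V → ℝ) {x y : V} (p : G.Walk x y) (hp : p.IsPath)
    (hx : 0 ≤ φ x) (hy : φ y ≤ 0) (hxy : x ≠ y) :
    ∃ u v, G.Adj u v ∧ 0 ≤ φ u ∧ φ v ≤ 0 ∧ x ∈ branch G v u ∧ y ∈ branch G u v ∧
      v ∈ p.support := by
  induction p with
  | nil => exact absurd rfl hxy
  | @cons x m y h q ih =>
    obtain ⟨hq, hxq⟩ := (Walk.cons_isPath_iff h q).1 hp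
    by_cases hm : φ m ≤ 0
    · exact ⟨x, m, h, hx, hm, start_mem_branch h.ne, ⟨q, hxq⟩, by simp⟩
    push Not at hm
    obtain ⟨u, v, huv, hu, hv, hmA, hyB, hvq⟩ :=
      ih hq hm.le hy (by rintro rfl; linarith)
    have hxv : x ≠ v := by rintro rfl; exact hxq hvq
    exact ⟨u, v, huv, hu, hv, mem_branch_of_adj hmA h.symm hxv, hyB, by simp [hvq]⟩

lemma vdist_add_vdist_le_of_mem_branch {ℓ : V → V → ℝ} (hℓ : ∀ u v, 0 ≤ ℓ u v)
    (hT : G.IsTree) (h : G.Adj u v) (hy : y ∈ branch G u v) (hz : z ∈ branch G v u) :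
    vdist G ℓ y u + vdist G ℓ u z ≤ vdist G ℓ y z := by
  classical
  obtain ⟨p⟩ := hT.1 y z
  have hu : u ∈ p.bypass.support := by
    by_contra hu
    obtain ⟨q, hq⟩ := hy
    refine Set.disjoint_left.1 (disjoint_branch hT.2 h) hz ⟨q.append p.bypass, ?_⟩
    simp [Walk.mem_support_append_iff, hq, hu]
  calc vdist G ℓ y u + vdist G ℓ u z
      ≤ walkLength ℓ (p.bypass.takeUntil u hu) + walkLength ℓ (p.bypass.dropUntil u hu) :=
        add_le_add (vdist_le_walkLength hℓ _) (vdist_le_walkLength hℓ _)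
    _ = vdist G ℓ y z := by
        rw [← walkLength_append, Walk.take_spec,
          vdist_eq_walkLength_of_isPath hℓ hT.2 p.bypass_isPath]

end Branch

section PointDistance

variable {V : Type*} {G : SimpleGraph V} {ℓ : V → V → ℝ} {S : Set V} {a b : V} {s : ℝ}

lemma IsPointOn.adj_or_eq (hx : IsPointOn G S a b s) : G.Adj a b ∨ a = b :=
  hx.2.2.imp And.left And.left

lemma IsPointOn.mem_Icc (hx : IsPointOn G S a b s) : s ∈ Icc (0 : ℝ) 1 :=
  hx.2.2.elim And.right fun h => by simp [h.2]

lemma IsPointOn.eq_zero_of_eq (hx : IsPointOn G S a b s) (hab : a = b) : s = 0 :=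
  hx.2.2.elim (fun h => absurd (hab ▸ h.1) (G.irrefl)) And.right

lemma IsPointOn.univ (hx : IsPointOn G S a b s) : IsPointOn G univ a b s :=
  ⟨trivial, trivial, hx.2.2⟩

lemma pdist_le_pdist_add {y z : V} {c : ℝ} (ha : vdist G ℓ a z ≤ vdist G ℓ a y + c)
    (hb : vdist G ℓ b z ≤ vdist G ℓ b y + c) : pdist G ℓ a b s z ≤ pdist G ℓ a b s y + c := by
  simp only [pdist, ← min_add_add_right]
  exact min_le_min (by linarith) (by linarith)

lemma pdist_add_le_pdist {y z : V} {c : ℝ} (ha : vdist G ℓ a y + c ≤ vdist G ℓ a z)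
    (hb : vdist G ℓ b y + c ≤ vdist G ℓ b z) : pdist G ℓ a b s y + c ≤ pdist G ℓ a b s z := by
  simp only [pdist, ← min_add_add_right]
  exact min_le_min (by linarith) (by linarith)

variable (hℓ : ∀ u v, 0 ≤ ℓ u v)
include hℓ

lemma IsPointOn.vdist_le (hx : IsPointOn G S a b s) : vdist G ℓ a b ≤ ℓ a b := by
  rcases hx.adj_or_eq with h | rfl
  · simpa using vdist_le_walkLength hℓ (Walk.cons h Walk.nil)
  · rw [vdist_self hℓ]
    exact hℓ a a

lemma le_pdist_of_le_vdist (hs : s ∈ Icc (0 : ℝ) 1) {c : ℝ} {z : V}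
    (ha : c ≤ vdist G ℓ a z) (hb : c ≤ vdist G ℓ b z) : c ≤ pdist G ℓ a b s z :=
  le_min (le_add_of_nonneg_of_le (mul_nonneg hs.1 (hℓ a b)) ha)
    (le_add_of_nonneg_of_le (mul_nonneg (sub_nonneg.2 hs.2) (hℓ a b)) hb)

lemma pdist_nonneg (hs : s ∈ Icc (0 : ℝ) 1) (z : V) : 0 ≤ pdist G ℓ a b s z :=
  le_pdist_of_le_vdist hℓ hs (vdist_nonneg hℓ a z) (vdist_nonneg hℓ b z)

lemma pdist_left_le : pdist G ℓ a b s a ≤ s * ℓ a b :=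
  (min_le_left _ _).trans_eq (by rw [vdist_self hℓ, add_zero])

lemma pdist_right_le : pdist G ℓ a b s b ≤ (1 - s) * ℓ a b :=
  (min_le_right _ _).trans_eq (by rw [vdist_self hℓ, add_zero])

variable (hT : G.IsTree)
include hT

lemma pdist_le_pdist_add_vdist (y z : V) :
    pdist G ℓ a b s z ≤ pdist G ℓ a b s y + vdist G ℓ y z :=
  pdist_le_pdist_add (vdist_triangle hℓ hT a y z) (vdist_triangle hℓ hT b y z)

lemma pdist_zero (hab : vdist G ℓ a b ≤ ℓ a b) (z : V) : pdist G ℓ a b 0 z = vdist G ℓ a z := by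
  have := vdist_triangle hℓ hT a b z
  simp only [pdist, zero_mul, zero_add, sub_zero, one_mul]
  exact min_eq_left (by linarith)

lemma pdist_one (hsym : ∀ u v, ℓ u v = ℓ v u) (hab : vdist G ℓ a b ≤ ℓ a b) (z : V) :
    pdist G ℓ a b 1 z = vdist G ℓ b z := by
  have := vdist_triangle hℓ hT b a z
  rw [vdist_comm hsym b a] at this
  simp only [pdist, one_mul, sub_self, zero_mul, zero_add]
  exact min_eq_right (by linarith)

lemma vdist_le_pdist_add_pdist (hsym : ∀ u v, ℓ u v = ℓ v u) (hab : vdist G ℓ a b ≤ ℓ a b)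
    (hs : s ∈ Icc (0 : ℝ) 1) (y z : V) :
    vdist G ℓ y z ≤ pdist G ℓ a b s y + pdist G ℓ a b s z := by
  have := vdist_triangle hℓ hT y a z
  have := vdist_triangle hℓ hT y b z
  have := vdist_triangle hℓ hT a b z
  have := vdist_triangle hℓ hT b a z
  have := vdist_comm hsym (G := G) y a
  have := vdist_comm hsym (G := G) y b
  have := vdist_comm hsym (G := G) a b
  have := mul_nonneg hs.1 (hℓ a b)
  have := mul_nonneg (sub_nonneg.2 hs.2) (hℓ a b)
  unfold pdist
  rcases min_choice (s * ℓ a b + vdist G ℓ a y) ((1 - s) * ℓ a b + vdist G ℓ b y) with h | h <;>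
  rcases min_choice (s * ℓ a b + vdist G ℓ a z) ((1 - s) * ℓ a b + vdist G ℓ b z) with h' | h' <;>
  rw [h, h'] <;> linarith

variable (hsym : ∀ u v, ℓ u v = ℓ v u) {u v : V} (h : G.Adj u v)
include hsym h

lemma pdist_add_vdist_le_pdist (hx : IsPointOn G S a b s)
    (hcl : InClosureOfSide (branch G u v) u a b s) {z : V} (hz : z ∈ branch G v u) :
    pdist G ℓ a b s u + vdist G ℓ u z ≤ pdist G ℓ a b s z := by
  have hu : ∀ y ∈ insert u (branch G u v), vdist G ℓ y u + vdist G ℓ u z ≤ vdist G ℓ y z := by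
    rintro y (rfl | hy)
    · rw [vdist_self hℓ, zero_add]
    · exact vdist_add_vdist_le_of_mem_branch hℓ hT h hy hz
  rcases hcl with ⟨ha, hb⟩ | ⟨rfl, rfl⟩ | ⟨rfl, rfl⟩
  · exact pdist_add_le_pdist (hu a ha) (hu b hb)
  · rw [pdist_zero hℓ hT (hx.vdist_le hℓ), pdist_zero hℓ hT (hx.vdist_le hℓ), vdist_self hℓ,
      zero_add]
  · rw [pdist_one hℓ hT hsym (hx.vdist_le hℓ), pdist_one hℓ hT hsym (hx.vdist_le hℓ),
      vdist_self hℓ, zero_add]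

lemma exists_isPointOn_branch_pdist_le (hx : IsPointOn G S a b s)
    (hcl : InClosureOfSide (branch G v u) v a b s) :
    ∃ a₀ b₀ s₀, IsPointOn G (branch G v u) a₀ b₀ s₀ ∧
      ∀ z ∈ branch G v u, pdist G ℓ a₀ b₀ s₀ z ≤ pdist G ℓ a b s z := by
  by_cases hin : a ∈ branch G v u ∧ b ∈ branch G v u
  · exact ⟨a, b, s, ⟨hin.1, hin.2, hx.2.2⟩, fun _ _ => le_rfl⟩
  have hu := start_mem_branch (G := G) h.ne
  refine ⟨u, u, 0, ⟨hu, hu, Or.inr ⟨rfl, rfl⟩⟩, fun z hz => ?_⟩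
  rw [pdist_zero hℓ hT (by rw [vdist_self hℓ]; exact hℓ u u)]
  have huv : ∀ y, y = u ∨ y = v → vdist G ℓ u z ≤ vdist G ℓ y z := by
    rintro y (rfl | rfl)
    · exact le_rfl
    · have := vdist_add_vdist_le_of_mem_branch hℓ hT h (start_mem_branch h.ne.symm) hz
      linarith [vdist_nonneg hℓ (G := G) y u]
  rcases hcl with ⟨ha, hb⟩ | ⟨rfl, rfl⟩ | ⟨rfl, rfl⟩
  · obtain ⟨ha', hb'⟩ := eq_or_eq_of_mem_insert_branch hT.2 h hx.adj_or_eq ha hb hin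
    exact le_pdist_of_le_vdist hℓ hx.mem_Icc (huv a ha') (huv b hb')
  · rw [pdist_zero hℓ hT (hx.vdist_le hℓ)]
    exact huv a (.inr rfl)
  · rw [pdist_one hℓ hT hsym (hx.vdist_le hℓ)]
    exact huv b (.inr rfl)

end PointDistance

lemma le_max_csInf_of_forall {α : Type*} [ConditionallyCompleteLinearOrder α] {s : Set α}
    (hs : s.Nonempty) {a b : α} (h : ∀ x ∈ s, a ≤ max x b) : a ≤ max (sInf s) b := by
  by_contra! hlt
  obtain ⟨x, hx, hxa⟩ := exists_lt_of_csInf_lt hs ((le_max_left _ _).trans_lt hlt)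
  exact (h x hx).not_gt (max_lt hxa ((le_max_right _ _).trans_lt hlt))

section SeparatingEdge

variable {V : Type*} {G : SimpleGraph V} {ℓ : V → V → ℝ}

structure IsSeparatingEdge (G : SimpleGraph V) (ℓ : V → V → ℝ) (u v a b : V) (s : ℝ)
    (a' b' : V) (s' : ℝ) : Prop where
  adj : G.Adj u v
  inClosure_left : InClosureOfSide (branch G v u) v a b s
  inClosure_right : InClosureOfSide (branch G u v) u a' b' s'
  pdist_le_left : pdist G ℓ a b s u ≤ pdist G ℓ a' b' s' u
  pdist_le_right : pdist G ℓ a' b' s' v ≤ pdist G ℓ a b s v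

variable {u v a b a' b' : V} {s s' : ℝ}

lemma IsSeparatingEdge.symm (h : IsSeparatingEdge G ℓ u v a b s a' b' s') :
    IsSeparatingEdge G ℓ v u a' b' s' a b s :=
  ⟨h.adj.symm, h.inClosure_right, h.inClosure_left, h.pdist_le_right, h.pdist_le_left⟩

variable {S S' : Set V} (hℓ : ∀ u v, 0 ≤ ℓ u v) (hT : G.IsTree) (hsym : ∀ u v, ℓ u v = ℓ v u)
include hℓ hT hsym

lemma isSeparatingEdge_of_adj (hab : G.Adj a b) (hx' : IsPointOn G S' a' b' s')
    (hle : pdist G ℓ a' b' s' a ≤ pdist G ℓ a b s a)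
    (hside : a' ∈ branch G b a ∨ b' ∈ branch G b a) :
    IsSeparatingEdge G ℓ b a a b s a' b' s' where
  adj := hab.symm
  inClosure_left := Or.inl ⟨mem_insert _ _, mem_insert_of_mem _ (start_mem_branch hab.ne.symm)⟩
  inClosure_right := inClosureOfSide_of_mem_branch hside hx'.adj_or_eq
  pdist_le_left := by
    have := vdist_le_pdist_add_pdist hℓ hT hsym (hx'.vdist_le hℓ) hx'.mem_Icc a b
    rw [vdist_of_adj hℓ hT.2 hab] at this
    have ha : pdist G ℓ a b s a ≤ s * ℓ a b := pdist_left_le hℓ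
    have hb : pdist G ℓ a b s b ≤ (1 - s) * ℓ a b := pdist_right_le hℓ
    linarith
  pdist_le_right := hle

lemma exists_isSeparatingEdge_of_lt (hx : IsPointOn G S a b s) (hx' : IsPointOn G S' a' b' s')
    (hlt : pdist G ℓ a' b' s' a < pdist G ℓ a b s a) :
    ∃ u v, IsSeparatingEdge G ℓ u v a b s a' b' s' := by
  have hxa : pdist G ℓ a b s a ≤ s * ℓ a b := pdist_left_le hℓ
  rcases hx.adj_or_eq with hab | hab
  swap
  · obtain rfl := hx.eq_zero_of_eq hab
    have : 0 ≤ pdist G ℓ a' b' s' a := pdist_nonneg hℓ hx'.mem_Icc a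
    linarith [zero_mul (ℓ a b)]
  refine ⟨b, a, isSeparatingEdge_of_adj hℓ hT hsym hab hx' hlt.le ?_⟩
  by_contra! hside
  -- otherwise `x'` lies beyond `b`, at distance at least `ℓ a b` from `a`
  have hfar : ∀ y ∉ branch G b a, ℓ a b ≤ vdist G ℓ y a := by
    intro y hy
    have := vdist_add_vdist_le_of_mem_branch hℓ hT hab.symm (start_mem_branch hab.ne)
      ((mem_branch_or_mem_branch hT.1 hab.ne y).resolve_left hy)
    rw [vdist_of_adj hℓ hT.2 hab, vdist_comm hsym a y] at this
    linarith [vdist_nonneg hℓ (G := G) b y]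
  have := le_pdist_of_le_vdist hℓ hx'.mem_Icc (hfar a' hside.1) (hfar b' hside.2)
  have := mul_le_of_le_one_left (hℓ a b) hx.mem_Icc.2
  linarith

theorem exists_isSeparatingEdge (hE : ∃ u v, G.Adj u v) (hx : IsPointOn G S a b s)
    (hx' : IsPointOn G S' a' b' s') : ∃ u v, IsSeparatingEdge G ℓ u v a b s a' b' s' := by
  classical
  by_cases h₁ : pdist G ℓ a' b' s' a < pdist G ℓ a b s a
  · exact exists_isSeparatingEdge_of_lt hℓ hT hsym hx hx' h₁
  by_cases h₂ : pdist G ℓ a b s a' < pdist G ℓ a' b' s' a'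
  · obtain ⟨u, v, huv⟩ := exists_isSeparatingEdge_of_lt hℓ hT hsym hx' hx h₂
    exact ⟨v, u, huv.symm⟩
  push Not at h₁ h₂
  by_cases haa' : a = a'
  · subst haa'
    rcases hx.adj_or_eq with hab | rfl
    · exact ⟨b, a, isSeparatingEdge_of_adj hℓ hT hsym hab hx' h₂ (.inl (start_mem_branch hab.ne))⟩
    rcases hx'.adj_or_eq with hab' | rfl
    · exact ⟨a, b', (isSeparatingEdge_of_adj hℓ hT hsym hab' hx h₁
        (.inl (start_mem_branch hab'.ne))).symm⟩
    -- both centres are the vertex `a`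
    obtain ⟨x, y, hxy⟩ := hE
    have := hxy.nontrivial
    obtain ⟨n, hn⟩ := hT.1.preconnected.exists_adj_of_nontrivial a
    rw [hx.eq_zero_of_eq rfl, hx'.eq_zero_of_eq rfl]
    exact ⟨a, n, hn, .inl ⟨mem_insert_of_mem _ (start_mem_branch hn.ne),
      mem_insert_of_mem _ (start_mem_branch hn.ne)⟩, .inr (.inl ⟨rfl, rfl⟩), le_rfl, le_rfl⟩
  obtain ⟨p⟩ := hT.1 a a'
  obtain ⟨u, v, huv, hu, hv, ha, ha', -⟩ :=
    exists_adj_sign_change_of_isPath (fun z => pdist G ℓ a' b' s' z - pdist G ℓ a b s z)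
      p.bypass p.bypass_isPath (sub_nonneg.2 h₁) (sub_nonpos.2 h₂) haa'
  exact ⟨u, v, huv, inClosureOfSide_of_mem_branch (.inl ha) hx.adj_or_eq,
    inClosureOfSide_of_mem_branch (.inl ha') hx'.adj_or_eq, sub_nonneg.1 hu, sub_nonpos.1 hv⟩

end SeparatingEdge

section TwoCenter

variable {V : Type*} {G : SimpleGraph V} {ℓ : V → V → ℝ} {w : V → ℝ}
  {S : Set V} {u v a b a' b' : V} {s s' : ℝ}

lemma mul_pdist_le_sideSup [Finite V] {z : V} (hz : z ∈ S) :
    w z * pdist G ℓ a b s z ≤ sideSup G ℓ w S a b s :=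
  le_csSup (S.toFinite.image _).bddAbove (mem_image_of_mem _ hz)

lemma mul_min_pdist_le_twoCost [Fintype V] [Nonempty V] (z : V) :
    w z * min (pdist G ℓ a b s z) (pdist G ℓ a' b' s' z) ≤ twoCost G ℓ w a b s a' b' s' :=
  Finset.le_sup' (fun z => w z * min (pdist G ℓ a b s z) (pdist G ℓ a' b' s' z))
    (Finset.mem_univ z)

lemma twoCost_comm [Fintype V] [Nonempty V] :
    twoCost G ℓ w a b s a' b' s' = twoCost G ℓ w a' b' s' a b s :=
  Finset.sup'_congr _ rfl fun z _ => by rw [min_comm]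

variable (hw : ∀ v, 0 ≤ w v)
include hw

lemma twoCost_le_max_sideSup [Fintype V] [Nonempty V] (hG : G.Connected) (h : G.Adj u v) :
    twoCost G ℓ w a b s a' b' s' ≤
      max (sideSup G ℓ w (branch G v u) a b s) (sideSup G ℓ w (branch G u v) a' b' s') := by
  refine Finset.sup'_le _ _ fun z _ => ?_
  rcases mem_branch_or_mem_branch hG h.ne z with hz | hz
  · exact (mul_le_mul_of_nonneg_left (min_le_left _ _) (hw z)).trans
      ((mul_pdist_le_sideSup hz).trans (le_max_left _ _))
  · exact (mul_le_mul_of_nonneg_left (min_le_right _ _) (hw z)).trans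
      ((mul_pdist_le_sideSup hz).trans (le_max_right _ _))

variable (hℓ : ∀ u v, 0 ≤ ℓ u v)
include hℓ

lemma sideSup_nonneg [Finite V] (hx : IsPointOn G S a b s) : 0 ≤ sideSup G ℓ w S a b s :=
  (mul_nonneg (hw a) (pdist_nonneg hℓ hx.mem_Icc a)).trans (mul_pdist_le_sideSup hx.1)

lemma radius_le_sideSup [Finite V] (hx : IsPointOn G S a b s) :
    radius G ℓ w S ≤ sideSup G ℓ w S a b s :=
  csInf_le ⟨0, by rintro _ ⟨a, b, s, hx, rfl⟩; exact sideSup_nonneg hw hℓ hx⟩ ⟨a, b, s, hx, rfl⟩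

lemma gval_nonneg [Finite V] (u v : V) : 0 ≤ gval G ℓ w u v :=
  le_max_of_le_left <| Real.sInf_nonneg <| by
    rintro _ ⟨a, b, s, hx, rfl⟩
    exact sideSup_nonneg hw hℓ hx

lemma twoCost_nonneg [Fintype V] [Nonempty V] {S' : Set V} (hx : IsPointOn G S a b s)
    (hx' : IsPointOn G S' a' b' s') : 0 ≤ twoCost G ℓ w a b s a' b' s' :=
  (mul_nonneg (hw _) (le_min (pdist_nonneg hℓ hx.mem_Icc _) (pdist_nonneg hℓ hx'.mem_Icc _))).trans
    (mul_min_pdist_le_twoCost (Classical.arbitrary V))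

lemma csInf_twoCost_le_gval [Fintype V] [Nonempty V] (hG : G.Connected) (h : G.Adj u v) :
    sInf {x | ∃ a b s a' b' s', IsPointOn G univ a b s ∧ IsPointOn G univ a' b' s' ∧
      x = twoCost G ℓ w a b s a' b' s'} ≤ gval G ℓ w u v := by
  have hbdd : BddBelow {x | ∃ a b s a' b' s', IsPointOn G univ a b s ∧
      IsPointOn G univ a' b' s' ∧ x = twoCost G ℓ w a b s a' b' s'} :=
    ⟨0, by rintro _ ⟨a, b, s, a', b', s', hx, hx', rfl⟩; exact twoCost_nonneg hw hℓ hx hx'⟩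
  have hu := start_mem_branch (G := G) h.ne
  have hv := start_mem_branch (G := G) h.ne.symm
  unfold gval _root_.radius
  refine le_max_csInf_of_forall ?_ ?_
  · exact ⟨_, u, u, 0, ⟨hu, hu, .inr ⟨rfl, rfl⟩⟩, rfl⟩
  rintro _ ⟨a, b, s, hx, rfl⟩
  rw [max_comm]
  refine le_max_csInf_of_forall ?_ ?_
  · exact ⟨_, v, v, 0, ⟨hv, hv, .inr ⟨rfl, rfl⟩⟩, rfl⟩
  rintro _ ⟨a', b', s', hx', rfl⟩
  rw [max_comm]
  exact (csInf_le hbdd ⟨a, b, s, a', b', s', hx.univ, hx'.univ, rfl⟩).trans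
    (twoCost_le_max_sideSup hw hG h)

variable (hT : G.IsTree) (hsym : ∀ u v, ℓ u v = ℓ v u)
include hT hsym

lemma radius_le_twoCost_of_isSeparatingEdge [Fintype V] [Nonempty V] {S' : Set V}
    (hsep : IsSeparatingEdge G ℓ u v a b s a' b' s') (hx : IsPointOn G S a b s)
    (hx' : IsPointOn G S' a' b' s') :
    radius G ℓ w (branch G v u) ≤ twoCost G ℓ w a b s a' b' s' := by
  obtain ⟨a₀, b₀, s₀, hx₀, hle⟩ :=
    exists_isPointOn_branch_pdist_le hℓ hT hsym hsep.adj hx hsep.inClosure_left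
  have hnear : ∀ z ∈ branch G v u, pdist G ℓ a b s z ≤ pdist G ℓ a' b' s' z := fun z hz =>
    calc pdist G ℓ a b s z ≤ pdist G ℓ a b s u + vdist G ℓ u z :=
          pdist_le_pdist_add_vdist hℓ hT u z
      _ ≤ pdist G ℓ a' b' s' u + vdist G ℓ u z := by linarith [hsep.pdist_le_left]
      _ ≤ pdist G ℓ a' b' s' z :=
          pdist_add_vdist_le_pdist hℓ hT hsym hsep.adj hx' hsep.inClosure_right hz
  refine (radius_le_sideSup hw hℓ hx₀).trans
    (csSup_le ((nonempty_of_mem (start_mem_branch hsep.adj.ne)).image _) ?_)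
  rintro _ ⟨z, hz, rfl⟩
  exact (mul_le_mul_of_nonneg_left (le_min (hle z hz) ((hle z hz).trans (hnear z hz)))
    (hw z)).trans (mul_min_pdist_le_twoCost z)

lemma IsSeparatingEdge.gval_le_twoCost [Fintype V] [Nonempty V] {S' : Set V}
    (hsep : IsSeparatingEdge G ℓ u v a b s a' b' s') (hx : IsPointOn G S a b s)
    (hx' : IsPointOn G S' a' b' s') :
    gval G ℓ w u v ≤ twoCost G ℓ w a b s a' b' s' :=
  max_le (radius_le_twoCost_of_isSeparatingEdge hw hℓ hT hsym hsep hx hx')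
    (twoCost_comm (a := a) ▸ radius_le_twoCost_of_isSeparatingEdge hw hℓ hT hsym hsep.symm hx' hx)

end TwoCenter

theorem stmt16_general {V : Type*} [Fintype V] [Nonempty V]
    (G : SimpleGraph V) (hG : G.IsTree)
    (w : V → ℝ) (hw : ∀ v, 0 < w v)
    (ℓ : V → V → ℝ) (hℓsym : ∀ u v, ℓ u v = ℓ v u)
    (hℓnn : ∀ u v, 0 ≤ ℓ u v)
    (hE : ∃ u v, G.Adj u v) :
    (∀ a b s a' b' s', IsPointOn G Set.univ a b s → IsPointOn G Set.univ a' b' s' →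
      ∃ u v, G.Adj u v ∧
        InClosureOfSide (branch G v u) v a b s ∧
        InClosureOfSide (branch G u v) u a' b' s' ∧
        gval G ℓ w u v ≤ twoCost G ℓ w a b s a' b' s') ∧
    sInf {x | ∃ a b s a' b' s', IsPointOn G Set.univ a b s ∧
        IsPointOn G Set.univ a' b' s' ∧ x = twoCost G ℓ w a b s a' b' s'} =
      sInf {x | ∃ u v, G.Adj u v ∧ x = gval G ℓ w u v} := by
  have hw' : ∀ v, 0 ≤ w v := fun v => (hw v).le
  refine ⟨fun a b s a' b' s' hx hx' => ?_, le_antisymm ?_ ?_⟩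
  · obtain ⟨u, v, hsep⟩ := exists_isSeparatingEdge hℓnn hG hℓsym hE hx hx'
    exact ⟨u, v, hsep.adj, hsep.inClosure_left, hsep.inClosure_right,
      hsep.gval_le_twoCost hw' hℓnn hG hℓsym hx hx'⟩
  · obtain ⟨u, v, huv⟩ := hE
    refine le_csInf ⟨_, u, v, huv, rfl⟩ ?_
    rintro _ ⟨u, v, huv, rfl⟩
    exact csInf_twoCost_le_gval hw' hℓnn hG.1 huv
  · obtain ⟨t⟩ := ‹Nonempty V›
    have ht : IsPointOn G univ t t 0 := ⟨trivial, trivial, .inr ⟨rfl, rfl⟩⟩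
    refine le_csInf ⟨_, t, t, 0, t, t, 0, ht, ht, rfl⟩ ?_
    rintro _ ⟨a, b, s, a', b', s', hx, hx', rfl⟩
    obtain ⟨u, v, hsep⟩ := exists_isSeparatingEdge hℓnn hG hℓsym hE hx hx'
    have hbdd : BddBelow {x | ∃ u v, G.Adj u v ∧ x = gval G ℓ w u v} :=
      ⟨0, by rintro _ ⟨u, v, -, rfl⟩; exact gval_nonneg hw' hℓnn u v⟩
    exact (csInf_le hbdd ⟨u, v, hsep.adj, rfl⟩).trans
      (hsep.gval_le_twoCost hw' hℓnn hG hℓsym hx hx')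

/-- For any two points `x₁, x₂` on a tree there is an edge `(u,v)` with `x₁` in the
closure of `u`'s side and `x₂` in the closure of `v`'s side, whence
`S(X,T) ≥ max(r(T_u(v)), r(T_v(u)))`; consequently the optimal 2-center cost equals
`min_{(u,v)∈E} max(r(T_u(v)), r(T_v(u)))`. -/
theorem stmt16 {V : Type*} [Fintype V] [DecidableEq V] [Nonempty V]
    (G : SimpleGraph V) (hG : G.IsTree)
    (w : V → ℝ) (hw : ∀ v, 0 < w v)
    (ℓ : V → V → ℝ) (hℓsym : ∀ u v, ℓ u v = ℓ v u)
    (hℓpos : ∀ u v, G.Adj u v → 0 < ℓ u v) (hℓnn : ∀ u v, 0 ≤ ℓ u v)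
    (hE : ∃ u v, G.Adj u v) :
    (∀ a b s a' b' s', IsPointOn G Set.univ a b s → IsPointOn G Set.univ a' b' s' →
      ∃ u v, G.Adj u v ∧
        InClosureOfSide (branch G v u) v a b s ∧
        InClosureOfSide (branch G u v) u a' b' s' ∧
        gval G ℓ w u v ≤ twoCost G ℓ w a b s a' b' s') ∧
    sInf {x | ∃ a b s a' b' s', IsPointOn G Set.univ a b s ∧
        IsPointOn G Set.univ a' b' s' ∧ x = twoCost G ℓ w a b s a' b' s'} =
      sInf {x | ∃ u v, G.Adj u v ∧ x = gval G ℓ w u v} :=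
  stmt16_general G hG w hw ℓ hℓsym hℓnn hE
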